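/- arXiv:1210.3780 — 5 statements merged into one kernel-verified Lean document; each statement's English description precedes it below -/
import Mathlib

section
/- Let A be a divisible abelian group and G an abelian group. A central extension 1 → A → Ĝ → G → 1 splits (admits a group-theoretic section G → Ĝ) if and only if the commutator pairing ⟨a,b⟩ = [â,b̂] on G × G with values in A is identically trivial. -/
/-!
In a central extension the commutator `⁅x, y⁆` depends only on the images of `x` and `y`, so a
homomorphic section turns it into the image of a commutator in the abelian group `G`, which is
trivial. Conversely, a trivial pairing makes `Ĝ` abelian; its kernel, being divisible, is an
injective `ℤ`-module by Baer's criterion, so the inclusion of the kernel has a retraction and the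
splitting lemma produces a section.
-/

open scoped commutatorElement

section
variable {M N : Type*}

theorem commutatorElement_mul_left_of_mem_center [Group M] {z : M}
    (hz : z ∈ Subgroup.center M) (x y : M) : ⁅x * z, y⁆ = ⁅x, y⁆ := by
  have : Commute z y := (Subgroup.mem_center_iff.mp hz y).symm
  rw [commutatorElement_mul_left_eq_conj_mul, this.commutator_eq, mul_one, mul_inv_cancel,
    one_mul]

theorem commutatorElement_mul_right_of_mem_center [Group M] {z : M}
    (hz : z ∈ Subgroup.center M) (x y : M) : ⁅x, y * z⁆ = ⁅x, y⁆ := by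
  have : Commute x z := Subgroup.mem_center_iff.mp hz x
  rw [commutatorElement_mul_right_eq_mul_conj, this.commutator_eq, mul_one, mul_inv_cancel_right]

theorem MonoidHom.commutatorElement_eq_of_map_eq [Group M] [Group N] (f : M →* N)
    (hf : f.ker ≤ Subgroup.center M) {x x' y y' : M} (hx : f x = f x') (hy : f y = f y') :
    ⁅x, y⁆ = ⁅x', y'⁆ := by
  have hx_center : x'⁻¹ * x ∈ Subgroup.center M := hf (by simp [hx])
  have hy_center : y'⁻¹ * y ∈ Subgroup.center M := hf (by simp [hy])
  calc ⁅x, y⁆ = ⁅x' * (x'⁻¹ * x), y' * (y'⁻¹ * y)⁆ := by simp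
    _ = ⁅x', y'⁆ := by
      rw [commutatorElement_mul_left_of_mem_center hx_center,
        commutatorElement_mul_right_of_mem_center hy_center]

theorem MonoidHom.commutatorElement_eq_one_of_rightInverse [Group M] [CommGroup N] (f : M →* N)
    (hf : f.ker ≤ Subgroup.center M) (s : N →* M) (hs : ∀ y, f (s y) = y) (x y : M) :
    ⁅x, y⁆ = 1 :=
  calc ⁅x, y⁆ = ⁅s (f x), s (f y)⁆ := f.commutatorElement_eq_of_map_eq hf (hs _).symm (hs _).symm
    _ = s ⁅f x, f y⁆ := (map_commutatorElement s _ _).symm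
    _ = 1 := by rw [(Commute.all _ _).commutator_eq, map_one]

theorem LinearMap.exists_rightInverse_of_divisibleBy_ker [AddCommGroup M] [AddCommGroup N]
    (f : M →ₗ[ℤ] N) (hf : Function.Surjective f) [DivisibleBy (LinearMap.ker f) ℤ] :
    ∃ s : N →ₗ[ℤ] M, f ∘ₗ s = LinearMap.id := by
  obtain ⟨r, hr⟩ := (Module.Baer.of_divisible (LinearMap.ker f)).extension_property
    (LinearMap.ker f).subtype (LinearMap.ker f).injective_subtype LinearMap.id
  have splitting := f.exact_subtype_ker_map.split_tfae (LinearMap.ker f).injective_subtype hf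
  exact (splitting.out 0 1).mpr (Exists.intro r hr)

theorem MonoidHom.exists_rightInverse_of_rootableBy_ker [CommGroup M] [CommGroup N] (f : M →* N)
    (hf : Function.Surjective f) [RootableBy f.ker ℕ] : ∃ s : N →* M, ∀ y, f (s y) = y := by
  let g := f.toAdditive.toIntLinearMap
  have : DivisibleBy (LinearMap.ker g) ℕ := divisibleByOfSMulRightSurj _ _ fun hn a => by
    obtain ⟨b, hb⟩ := RootableBy.surjective_pow _ _ hn (⟨a.1.toMul, a.2⟩ : f.ker)
    exact ⟨⟨Additive.ofMul b.1, b.2⟩, Subtype.ext (congrArg (Additive.ofMul ∘ Subtype.val) hb)⟩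
  have := AddGroup.divisibleByIntOfDivisibleByNat (LinearMap.ker g)
  obtain ⟨s, hs⟩ := g.exists_rightInverse_of_divisibleBy_ker hf
  exact ⟨MonoidHom.toAdditive.symm s.toAddMonoidHom, LinearMap.congr_fun hs⟩

end

/-- A central extension `1 → A → Ĝ →π G → 1` of an abelian group `G` by a divisible
abelian group `A` splits if and only if the commutator pairing
`⟨a,b⟩ = [â,b̂]` on `G × G` is identically trivial. -/
theorem central_extension_by_divisible_splits_iff_pairing_trivial
    {Ghat G : Type*} [Group Ghat] [CommGroup G] (π : Ghat →* G)
    (hsurj : Function.Surjective π) (hcent : π.ker ≤ Subgroup.center Ghat)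
    (hdiv : ∀ a : Ghat, π a = 1 → ∀ n : ℕ, 0 < n → ∃ b : Ghat, π b = 1 ∧ b ^ n = a) :
    (∃ s : G →* Ghat, ∀ g : G, π (s g) = g) ↔
      (∀ a b : G, ∀ x y : Ghat, π x = a → π y = b → ⁅x, y⁆ = 1) := by
  constructor
  · rintro ⟨s, hs⟩ a b x y - -
    exact π.commutatorElement_eq_one_of_rightInverse hcent s hs x y
  · intro hpair
    let _ : CommGroup Ghat :=
      { mul_comm x y := commutatorElement_eq_one_iff_mul_comm.mp (hpair _ _ x y rfl rfl) }
    have : RootableBy π.ker ℕ := rootableByOfPowLeftSurj _ _ fun {n} hn a => by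
      obtain ⟨b, hb, hbn⟩ := hdiv a a.2 n (Nat.pos_of_ne_zero hn)
      exact ⟨⟨b, hb⟩, Subtype.ext hbn⟩
    exact π.exists_rightInverse_of_rootableBy_ker hsurj
end

section
/- Let K be a complete discrete valuation field with valuation ν : K^* → ℤ, and suppose the residue field of K also carries a discrete valuation ν̄ : K̄^* → ℤ (e.g. K a two-dimensional local field). Define ν_K(f,g) = ν̄(image of f^{ν(g)}/g^{ν(f)} in the residue field) for f, g ∈ K^*. Then ν_K is well-defined (the element f^{ν(g)}/g^{ν(f)} is a unit of the valuation ring of K), biadditive in the sense ν_K(f₁f₂, g) = ν_K(f₁,g) + ν_K(f₂,g), and antisymmetric: ν_K(f,g) = −ν_K(g,f). -/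
/-- Let `K` be a field with a surjective discrete valuation `ν : K^* → ℤ` whose residue
field `K̄` (with residue map `r`) carries a discrete valuation `ν̄`. Then
`ν_K(f,g) = ν̄(r(f^{ν g} · g^{-ν f}))` is well defined (the element `f^{ν g} g^{-ν f}`
is a unit of the valuation ring), biadditive in the first argument, and antisymmetric. -/
theorem two_dim_valuation_symbol_well_defined_biadditive_antisymmetric
    {K Kbar : Type*} [Field K] [Field Kbar]
    (ν : K → ℤ) (νbar : Kbar → ℤ) (r : K → Kbar)
    (hν_mul : ∀ x y : K, x ≠ 0 → y ≠ 0 → ν (x * y) = ν x + ν y)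
    (hν_surj : ∀ n : ℤ, ∃ x : K, x ≠ 0 ∧ ν x = n)
    (hν_add : ∀ x y : K, x ≠ 0 → y ≠ 0 → x + y ≠ 0 → min (ν x) (ν y) ≤ ν (x + y))
    (hνbar_mul : ∀ a b : Kbar, a ≠ 0 → b ≠ 0 → νbar (a * b) = νbar a + νbar b)
    (hνbar_surj : ∀ n : ℤ, ∃ a : Kbar, a ≠ 0 ∧ νbar a = n)
    (hr_mul : ∀ x y : K, x ≠ 0 → y ≠ 0 → ν x = 0 → ν y = 0 → r (x * y) = r x * r y)
    (hr_ne : ∀ x : K, x ≠ 0 → ν x = 0 → r x ≠ 0) :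
    (∀ f g : K, f ≠ 0 → g ≠ 0 →
        f ^ (ν g) * g ^ (-(ν f)) ≠ 0 ∧ ν (f ^ (ν g) * g ^ (-(ν f))) = 0) ∧
    (∀ f₁ f₂ g : K, f₁ ≠ 0 → f₂ ≠ 0 → g ≠ 0 →
        νbar (r ((f₁ * f₂) ^ (ν g) * g ^ (-(ν (f₁ * f₂))))) =
          νbar (r (f₁ ^ (ν g) * g ^ (-(ν f₁)))) + νbar (r (f₂ ^ (ν g) * g ^ (-(ν f₂))))) ∧
    (∀ f g : K, f ≠ 0 → g ≠ 0 →
        νbar (r (f ^ (ν g) * g ^ (-(ν f)))) = - νbar (r (g ^ (ν f) * f ^ (-(ν g))))) := by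
  -- ν 1 = 0
  have h1 : ν 1 = 0 := by
    have := hν_mul 1 1 one_ne_zero one_ne_zero
    simp at this; omega
  have hinv : ∀ x : K, x ≠ 0 → ν x⁻¹ = - ν x := by
    intro x hx
    have := hν_mul x x⁻¹ hx (inv_ne_zero hx)
    rw [mul_inv_cancel₀ hx, h1] at this; omega
  have hpow : ∀ x : K, x ≠ 0 → ∀ n : ℕ, ν (x ^ n) = n * ν x := by
    intro x hx n
    induction n with
    | zero => simpa using h1
    | succ k ih =>
      rw [pow_succ, hν_mul _ x (pow_ne_zero k hx) hx, ih]
      push_cast; ring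
  have hzpow : ∀ x : K, x ≠ 0 → ∀ n : ℤ, ν (x ^ n) = n * ν x := by
    intro x hx n
    cases n with
    | ofNat k => rw [Int.ofNat_eq_coe, zpow_natCast, hpow x hx k]
    | negSucc k =>
      rw [zpow_negSucc, hinv _ (pow_ne_zero _ hx), hpow x hx, Int.negSucc_eq]
      push_cast; ring
  -- well-definedness
  have wd : ∀ f g : K, f ≠ 0 → g ≠ 0 →
      f ^ (ν g) * g ^ (-(ν f)) ≠ 0 ∧ ν (f ^ (ν g) * g ^ (-(ν f))) = 0 := by
    intro f g hf hg
    have hne : f ^ (ν g) * g ^ (-(ν f)) ≠ 0 :=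
      mul_ne_zero (zpow_ne_zero _ hf) (zpow_ne_zero _ hg)
    refine ⟨hne, ?_⟩
    rw [hν_mul _ _ (zpow_ne_zero _ hf) (zpow_ne_zero _ hg), hzpow f hf, hzpow g hg]
    ring
  refine ⟨wd, ?_, ?_⟩
  · intro f₁ f₂ g hf₁ hf₂ hg
    have key : (f₁ * f₂) ^ (ν g) * g ^ (-(ν (f₁ * f₂))) =
        (f₁ ^ (ν g) * g ^ (-(ν f₁))) * (f₂ ^ (ν g) * g ^ (-(ν f₂))) := by
      rw [hν_mul f₁ f₂ hf₁ hf₂, mul_zpow, neg_add, zpow_add₀ hg]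
      ring
    obtain ⟨hne1, hv1⟩ := wd f₁ g hf₁ hg
    obtain ⟨hne2, hv2⟩ := wd f₂ g hf₂ hg
    rw [key, hr_mul _ _ hne1 hne2 hv1 hv2,
      hνbar_mul _ _ (hr_ne _ hne1 hv1) (hr_ne _ hne2 hv2)]
  · intro f g hf hg
    have hr1 : r 1 = 1 := by
      have := hr_mul 1 1 one_ne_zero one_ne_zero h1 h1
      rw [mul_one] at this
      have h := hr_ne 1 one_ne_zero h1
      have h2 : r 1 * r 1 = r 1 * 1 := by rw [← this, mul_one]
      exact mul_left_cancel₀ h h2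
    have hb1 : νbar (1 : Kbar) = 0 := by
      have := hνbar_mul 1 1 one_ne_zero one_ne_zero
      simp at this; omega
    obtain ⟨hne1, hv1⟩ := wd f g hf hg
    obtain ⟨hne2, hv2⟩ := wd g f hg hf
    have key : (f ^ (ν g) * g ^ (-(ν f))) * (g ^ (ν f) * f ^ (-(ν g))) = 1 := by
      rw [mul_comm (g ^ (ν f)) (f ^ (-(ν g))), mul_mul_mul_comm, ← zpow_add₀ hf, ← zpow_add₀ hg]
      simp
    have := hr_mul _ _ hne1 hne2 hv1 hv2
    rw [key, hr1] at this
    have h2 := hνbar_mul _ _ (hr_ne _ hne1 hv1) (hr_ne _ hne2 hv2)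
    rw [← this, hb1] at h2
    omega
end

section
/- With K, ν, ν̄, ν_K as above, the map ν_K satisfies the Steinberg relation: ν_K(f, 1−f) = 0 for every f ∈ K^* with f ≠ 1. Hence ν_K factors through the Milnor K-group K_2(K). -/
/-- With `K, ν, ν̄, ν_K` as in the two-dimensional local field situation, the symbol
`ν_K(f,g) = ν̄(r(f^{ν g} · g^{-ν f}))` satisfies the Steinberg relation
`ν_K(f, 1 - f) = 0` for all `f ≠ 0, 1` (hence it factors through the Milnor
K-group `K₂(K)`). -/
theorem two_dim_valuation_symbol_steinberg
    {K Kbar : Type*} [Field K] [Field Kbar]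
    (ν : K → ℤ) (νbar : Kbar → ℤ) (r : K → Kbar)
    (hν_mul : ∀ x y : K, x ≠ 0 → y ≠ 0 → ν (x * y) = ν x + ν y)
    (hν_surj : ∀ n : ℤ, ∃ x : K, x ≠ 0 ∧ ν x = n)
    (hν_add : ∀ x y : K, x ≠ 0 → y ≠ 0 → x + y ≠ 0 → min (ν x) (ν y) ≤ ν (x + y))
    (hνbar_mul : ∀ a b : Kbar, a ≠ 0 → b ≠ 0 → νbar (a * b) = νbar a + νbar b)
    (hνbar_surj : ∀ n : ℤ, ∃ a : Kbar, a ≠ 0 ∧ νbar a = n)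
    (hνbar_add : ∀ a b : Kbar, a ≠ 0 → b ≠ 0 → a + b ≠ 0 →
        min (νbar a) (νbar b) ≤ νbar (a + b))
    (hr_zero : r 0 = 0) (hr_one : r 1 = 1)
    (hr_add : ∀ x y : K, (x = 0 ∨ 0 ≤ ν x) → (y = 0 ∨ 0 ≤ ν y) → r (x + y) = r x + r y)
    (hr_mul : ∀ x y : K, (x = 0 ∨ 0 ≤ ν x) → (y = 0 ∨ 0 ≤ ν y) → r (x * y) = r x * r y)
    (hr_ker : ∀ x : K, x ≠ 0 → 0 ≤ ν x → (r x = 0 ↔ 0 < ν x)) :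
    ∀ f : K, f ≠ 0 → f ≠ 1 →
      νbar (r (f ^ (ν (1 - f)) * (1 - f) ^ (-(ν f)))) = 0 := by

  -- basic valuation facts
  have hν1 : ν 1 = 0 := by
    have h := hν_mul 1 1 one_ne_zero one_ne_zero
    simp only [one_mul] at h; omega
  have hνn1 : ν (-1) = 0 := by
    have h := hν_mul (-1) (-1) (neg_ne_zero.2 one_ne_zero) (neg_ne_zero.2 one_ne_zero)
    simp only [neg_mul_neg, one_mul] at h; omega
  have hνneg : ∀ x : K, x ≠ 0 → ν (-x) = ν x := by
    intro x hx
    have h := hν_mul (-1) x (neg_ne_zero.2 one_ne_zero) hx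
    simp only [neg_one_mul] at h; omega
  have hνinv : ∀ x : K, x ≠ 0 → ν x⁻¹ = -ν x := by
    intro x hx
    have h := hν_mul x x⁻¹ hx (inv_ne_zero hx)
    rw [mul_inv_cancel₀ hx, hν1] at h; omega
  have hνpow : ∀ (x : K), x ≠ 0 → ∀ n : ℕ, ν (x ^ n) = n * ν x := by
    intro x hx n
    induction n with
    | zero => simpa using hν1
    | succ k ih =>
        rw [pow_succ, hν_mul _ _ (pow_ne_zero k hx) hx, ih]; push_cast; ring
  have hrpow : ∀ (x : K), x ≠ 0 → ν x = 0 → ∀ n : ℕ, r (x ^ n) = r x ^ n := by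
    intro x hx hx0 n
    induction n with
    | zero => simpa using hr_one
    | succ k ih =>
        rw [pow_succ, hr_mul _ _ (Or.inr (by rw [hνpow x hx k, hx0]; simp))
          (Or.inr (le_of_eq hx0.symm)), ih, pow_succ]
  have hνbar1 : νbar 1 = 0 := by
    have h := hνbar_mul 1 1 one_ne_zero one_ne_zero
    simp only [one_mul] at h; omega
  have hνbarn1 : νbar (-1) = 0 := by
    have h := hνbar_mul (-1) (-1) (neg_ne_zero.2 one_ne_zero) (neg_ne_zero.2 one_ne_zero)
    simp only [neg_mul_neg, one_mul] at h; omega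
  have hrneg1 : r (-1) = -1 := by
    have h := hr_add 1 (-1) (Or.inr hν1.ge) (Or.inr hνn1.ge)
    simp only [add_neg_cancel, hr_zero, hr_one] at h
    linear_combination -h
  intro f hf0 hf1
  set g : K := 1 - f with hg
  have hg0 : g ≠ 0 := sub_ne_zero.2 (Ne.symm hf1)
  set a := ν f with ha
  set b := ν g with hb
  -- triangle inequalities
  have h1 : min 0 a ≤ b := by
    have := hν_add 1 (-f) one_ne_zero (neg_ne_zero.2 hf0) (by rwa [← sub_eq_add_neg, ← hg])
    rw [hν1, hνneg f hf0, ← sub_eq_add_neg, ← hg] at this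
    exact this
  have h2 : min b a ≤ 0 := by
    have hgf : g + f ≠ 0 := by rw [hg]; simp
    have := hν_add g f hg0 hf0 hgf
    have hgfeq : g + f = 1 := by rw [hg]; ring
    rw [hgfeq, hν1] at this
    exact this
  have h3 : min b 0 ≤ a := by
    have hne : g + -1 ≠ 0 := by rw [hg]; intro h; apply hf0; linear_combination -h
    have := hν_add g (-1) hg0 (neg_ne_zero.2 one_ne_zero) hne
    have heq : g + -1 = -f := by rw [hg]; ring
    rw [heq, hνneg f hf0, hνn1] at this
    exact this
  rcases lt_trichotomy a 0 with hlt | heq | hgt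
  · -- a < 0 : b = a, element is (f/g)^a
    have hba : b = a := by omega
    have hνfinv : ν f⁻¹ = -a := hνinv f hf0
    have hrfinv : r f⁻¹ = 0 := (hr_ker f⁻¹ (inv_ne_zero hf0) (by omega)).2 (by omega)
    -- u⁻¹ = g * f⁻¹ = f⁻¹ - 1
    set w : K := g * f⁻¹ with hw
    have hw0 : w ≠ 0 := mul_ne_zero hg0 (inv_ne_zero hf0)
    have hνw : ν w = 0 := by
      rw [hw, hν_mul g f⁻¹ hg0 (inv_ne_zero hf0), ← hb, hνfinv, hba]; ring
    have hweq : w = f⁻¹ + -1 := by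
      rw [hw, hg]; field_simp; ring
    have hrw : r w = -1 := by
      rw [hweq, hr_add f⁻¹ (-1) (Or.inr (by omega)) (Or.inr hνn1.ge), hrfinv, hrneg1,
        zero_add]
    -- the element: f ^ b * g ^ (-a) = w ^ (-a), with -a > 0
    obtain ⟨n, hn⟩ : ∃ n : ℕ, -a = (n : ℤ) := ⟨(-a).toNat, (Int.toNat_of_nonneg (by omega)).symm⟩
    have hfa : f ^ b = (f⁻¹) ^ n := by
      rw [hba, show a = -(n : ℤ) by omega, zpow_neg, ← inv_zpow, zpow_natCast]
    have hga : g ^ (-a) = g ^ n := by rw [hn, zpow_natCast]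
    have helt : f ^ b * g ^ (-a) = w ^ n := by
      rw [hfa, hga, ← mul_pow, mul_comm f⁻¹ g, ← hw]
    rw [helt, hrpow w hw0 hνw n, hrw]
    rcases Nat.even_or_odd n with he | ho
    · rw [he.neg_one_pow]; exact hνbar1
    · rw [ho.neg_one_pow]; exact hνbarn1
  · -- a = 0
    rcases lt_or_eq_of_le (by omega : (0:ℤ) ≤ b) with hbpos | hb0
    · -- b > 0 : element is f ^ b
      have hrg : r (-g) = 0 :=
        (hr_ker (-g) (neg_ne_zero.2 hg0) (by rw [hνneg g hg0]; omega)).2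
          (by rw [hνneg g hg0]; omega)
      have hrf : r f = 1 := by
        have hfeq : f = 1 + -g := by rw [hg]; ring
        rw [hfeq, hr_add 1 (-g) (Or.inr hν1.ge) (Or.inr (by rw [hνneg g hg0]; omega)),
          hr_one, hrg, add_zero]
      obtain ⟨n, hn⟩ : ∃ n : ℕ, b = (n : ℤ) := ⟨b.toNat, (Int.toNat_of_nonneg (by omega)).symm⟩
      have helt : f ^ b * g ^ (-a) = f ^ n := by
        rw [heq, neg_zero, zpow_zero, mul_one, hn, zpow_natCast]
      rw [helt, hrpow f hf0 (by omega) n, hrf, one_pow]; exact hνbar1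
    · -- b = 0 : element is 1
      have helt : f ^ b * g ^ (-a) = 1 := by
        rw [heq, ← hb0, neg_zero, zpow_zero, zpow_zero, mul_one]
      rw [helt, hr_one]; exact hνbar1
  · -- a > 0 : b = 0, element is (g⁻¹) ^ a
    have hb0 : b = 0 := by omega
    have hrnf : r (-f) = 0 :=
      (hr_ker (-f) (neg_ne_zero.2 hf0) (by rw [hνneg f hf0]; omega)).2
        (by rw [hνneg f hf0]; omega)
    have hrg : r g = 1 := by
      have : g = 1 + -f := by rw [hg]; ring
      rw [this, hr_add 1 (-f) (Or.inr hν1.ge) (Or.inr (by rw [hνneg f hf0]; omega)),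
        hr_one, hrnf, add_zero]
    have hνginv : ν g⁻¹ = 0 := by rw [hνinv g hg0, ← hb, hb0, neg_zero]
    have hrginv : r g⁻¹ = 1 := by
      have h := hr_mul g g⁻¹ (Or.inr (by omega)) (Or.inr hνginv.ge)
      rw [mul_inv_cancel₀ hg0, hr_one, hrg, one_mul] at h
      exact h.symm
    obtain ⟨n, hn⟩ : ∃ n : ℕ, a = (n : ℤ) := ⟨a.toNat, (Int.toNat_of_nonneg (by omega)).symm⟩
    have helt : f ^ b * g ^ (-a) = (g⁻¹) ^ n := by
      rw [hb0, zpow_zero, one_mul, zpow_neg, ← inv_zpow, hn, zpow_natCast]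
    rw [helt, hrpow g⁻¹ (inv_ne_zero hg0) hνginv n, hrginv, one_pow]; exact hνbar1
end

section
/- Let K be the fraction field of a discrete valuation ring O. Then GL_n(K) = B(K) · GL_n(O), where B(K) is the subgroup of upper triangular invertible matrices: every g ∈ GL_n(K) can be written as g = b·k with b ∈ B(K) upper triangular and k ∈ GL_n(O). -/
/-! Clearing denominators, it suffices to find, for a matrix `M` over `O`, some `U ∈ GLₙ(O)`
with `M U` upper triangular; then `g = (g U) U⁻¹`. Divisibility in a valuation ring is total, so
this is column reduction from the bottom row up: in row `r`, swap a column `p ≤ r` whose entry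
divides the entries of all columns `≤ r` into position `r`, then subtract `O`-multiples of
column `r` from the columns to its left. The rows below `r` are unaffected, as their entries in
columns `≤ r` vanish. -/

open Matrix Equiv

theorem Finset.exists_forall_dvd_of_preValuationRing {ι R : Type*} [Monoid R]
    [PreValuationRing R] {s : Finset ι} (hs : s.Nonempty) (f : ι → R) :
    ∃ i ∈ s, ∀ j ∈ s, f i ∣ f j := by
  classical
  induction hs using Finset.Nonempty.cons_induction with
  | singleton a => exact ⟨a, by simp [dvd_refl]⟩
  | cons a s ha hs ih =>
    obtain ⟨i, hi, hdvd⟩ := ih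
    rcases ValuationRing.dvd_total (f a) (f i) with h | h
    · exact ⟨a, by simp, by simpa [dvd_refl] using fun j hj => h.trans (hdvd j hj)⟩
    · exact ⟨i, by simp [hi], by simpa [h] using hdvd⟩

theorem Equiv.swap_apply_mem {α : Type*} [DecidableEq α] {s : Set α} {a b x : α}
    (ha : a ∈ s) (hb : b ∈ s) (hx : x ∈ s) : swap a b x ∈ s := by
  rw [swap_apply_def]
  split_ifs <;> assumption

namespace Matrix

variable {m n R : Type*} [Fintype n] [DecidableEq n]

theorem exists_GL_mul_eq_submatrix [Semiring R] (N : Matrix m n R) (σ : Perm n) :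
    ∃ U : GL n R, N * (U : Matrix n n R) = N.submatrix id σ :=
  ⟨MonoidHom.toHomUnits (permMatrixHom (R := R)) σ, by
    simp [PEquiv.mul_toMatrix_toPEquiv, Perm.inv_def]⟩

theorem exists_GL_mul_eq_sub_vecMulVec [Ring R] (N : Matrix m n R) (r : n) (c : n → R)
    (hc : c r = 0) : ∃ U : GL n R, N * (U : Matrix n n R) = N - vecMulVec (N.col r) c := by
  set A := vecMulVec (Pi.single r 1) c
  have hA : IsNilpotent A := ⟨2, by simp [A, pow_two, vecMulVec_mul_vecMulVec, hc]⟩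
  refine ⟨hA.isUnit_one_sub.unit, ?_⟩
  simp [A, Matrix.mul_sub, mul_vecMulVec]

variable [CommRing R] [PreValuationRing R] {k : ℕ}

theorem exists_GL_mul_clear_row (N : Matrix (Fin k) (Fin k) R) (r : Fin k)
    (hN : ∀ i j, r < i → j < i → N i j = 0) :
    ∃ U : GL (Fin k) R,
      ∀ i j, r ≤ i → j < i → (N * (U : Matrix (Fin k) (Fin k) R)) i j = 0 := by
  obtain ⟨p, hpr, hp⟩ :=
    (Finset.Iic r).exists_forall_dvd_of_preValuationRing ⟨r, Finset.mem_Iic.2 le_rfl⟩ (N r)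
  rw [Finset.mem_Iic] at hpr
  set σ := Equiv.swap p r
  obtain ⟨U₁, hU₁⟩ := exists_GL_mul_eq_submatrix N σ
  set N' := N.submatrix id σ
  have hN' : ∀ i j, r < i → j < i → N' i j = 0 := fun i j hri hji =>
    hN i _ hri (Set.mem_Iio.1 <| swap_apply_mem (s := Set.Iio i) (hpr.trans_lt hri) hri hji)
  have hpivot : ∀ j < r, N' r r ∣ N' r j := fun j hj => by
    have hσj : σ j ≤ r :=
      Set.mem_Iic.1 <| swap_apply_mem (s := Set.Iic r) hpr Set.self_mem_Iic hj.le
    simpa [N', σ] using hp (σ j) (Finset.mem_Iic.2 hσj)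
  choose c hc using hpivot
  obtain ⟨U₂, hU₂⟩ :=
    exists_GL_mul_eq_sub_vecMulVec N' r (fun j => if h : j < r then c j h else 0) (by simp)
  refine ⟨U₁ * U₂, fun i j hri hji => ?_⟩
  rw [Units.val_mul, ← Matrix.mul_assoc, hU₁, hU₂, sub_apply, vecMulVec_apply]
  rcases hri.lt_or_eq with hri | rfl
  · simp [hN' i j hri hji, hN' i r hri hri]
  · simp [hji, ← hc]

theorem exists_GL_mul_isUpperTriangular (M : Matrix (Fin k) (Fin k) R) :
    ∃ U : GL (Fin k) R, (M * (U : Matrix (Fin k) (Fin k) R)).IsUpperTriangular := by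
  suffices h : ∀ t ≤ k, ∃ U : GL (Fin k) R,
      ∀ i j : Fin k, t ≤ (i : ℕ) → j < i → (M * (U : Matrix (Fin k) (Fin k) R)) i j = 0 by
    obtain ⟨U, hU⟩ := h 0 k.zero_le
    exact ⟨U, fun i j hji => hU i j i.val.zero_le hji⟩
  intro t ht
  induction ht using Nat.decreasingInduction with
  | self => exact ⟨1, fun i _ hi => absurd i.isLt (by omega)⟩
  | of_succ t ht ih =>
    obtain ⟨U, hU⟩ := ih
    obtain ⟨V, hV⟩ := exists_GL_mul_clear_row _ ⟨t, ht⟩ hU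
    exact ⟨U * V, fun i j hti hji => by simpa [Matrix.mul_assoc] using hV i j hti hji⟩

theorem exists_GL_map_mul_isUpperTriangular (O : Type*) {K : Type*} [CommRing O]
    [PreValuationRing O] [Field K] [Algebra O K] [IsFractionRing O K] {k : ℕ}
    (M : Matrix (Fin k) (Fin k) K) :
    ∃ U : GL (Fin k) O,
      (M * (GeneralLinearGroup.map (algebraMap O K) U : Matrix _ _ K)).IsUpperTriangular := by
  obtain ⟨d, hd⟩ := IsLocalization.exist_integer_multiples_of_finite (nonZeroDivisors O)
    fun p : Fin k × Fin k => M p.1 p.2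
  choose A hA using hd
  set A' : Matrix (Fin k) (Fin k) O := of fun i j => A (i, j)
  obtain ⟨U, hU⟩ := exists_GL_mul_isUpperTriangular A'
  refine ⟨U, fun i j hji => ?_⟩
  have hscale :
      algebraMap O K d • (M * (GeneralLinearGroup.map (algebraMap O K) U : Matrix _ _ K)) =
        (A' * (U : Matrix (Fin k) (Fin k) O)).map (algebraMap O K) := by
    rw [Matrix.map_mul, ← smul_mul]
    congr 1
    ext i j
    simp [A', hA, Algebra.smul_def]
  have h := congr_fun₂ hscale i j
  rw [smul_apply, smul_eq_mul, hU.map (algebraMap O K) hji] at h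
  exact (mul_eq_zero.1 h).resolve_left (IsLocalization.map_units K d).ne_zero

end Matrix

/-- Iwasawa decomposition: for a discrete valuation ring `O` with fraction field `K`,
`GLₙ(K) = B(K) · GLₙ(O)`, i.e. every `g ∈ GLₙ(K)` is a product `g = b · k` of an
invertible upper triangular matrix `b` and a matrix `k ∈ GLₙ(O)`. -/
theorem iwasawa_decomposition_GL_dvr
    (O : Type*) [CommRing O] [IsDomain O] [IsDiscreteValuationRing O]
    (n : ℕ) (g : GL (Fin n) (FractionRing O)) :
    ∃ b k : GL (Fin n) (FractionRing O),
      (∀ i j : Fin n, j < i → (b : Matrix (Fin n) (Fin n) (FractionRing O)) i j = 0) ∧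
      (∀ i j : Fin n, ∃ x : O,
          (k : Matrix (Fin n) (Fin n) (FractionRing O)) i j = algebraMap O (FractionRing O) x) ∧
      (∀ i j : Fin n, ∃ x : O,
          ((k⁻¹ : GL (Fin n) (FractionRing O)) : Matrix (Fin n) (Fin n) (FractionRing O)) i j
            = algebraMap O (FractionRing O) x) ∧
      g = b * k := by
  obtain ⟨U, hU⟩ := exists_GL_map_mul_isUpperTriangular O
    (g : Matrix (Fin n) (Fin n) (FractionRing O))
  set u := GeneralLinearGroup.map (algebraMap O (FractionRing O)) U
  refine ⟨g * u, u⁻¹, fun i j hji => hU hji, fun i j => ⟨(U⁻¹ : GL (Fin n) O) i j, ?_⟩,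
    fun i j => ⟨U i j, by simp [u]⟩, by simp⟩
  simp [u, ← map_inv]
end

section
/- Let K = k((t)) be the field of formal Laurent series over a field k, with t-adic valuation ν. The tame symbol λ(f,g) = (−1)^{ν(f)ν(g)} · (f^{ν(g)}/g^{ν(f)}) mod t, a map K^* × K^* → k^*, is bimultiplicative and satisfies the Steinberg relation λ(f, 1−f) = 1 for f ≠ 0,1. -/
/-!
Order and leading coefficient are multiplicative on nonzero Laurent series, and the series
whose constant term defines `tameSymbol f g` has order `0`, so that constant term is its leading
coefficient: `λ(f, g) = (-1)^{ν(f)ν(g)} lc(f)^{ν(g)} lc(g)^{-ν(f)}`, which is visibly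
bimultiplicative and nonzero. For the Steinberg relation compare `1 - f` with `f`: if `ν(f) > 0`,
then `1 - f` has order `0` and leading coefficient `1`; if `ν(f) < 0`, it has order `ν(f)` and
leading coefficient `-lc(f)`, and the sign `(-1)^{ν(f)(ν(f)-1)}` is `1`; if `ν(f) = 0`, then
either `ν(1 - f) = 0` or the constant term of `1 - f` vanishes, i.e. `lc(f) = 1`.
-/

open HahnSeries

/-- The tame symbol `λ(f,g) = (-1)^{ν(f)ν(g)} (f^{ν(g)}/g^{ν(f)}) mod t` on the field
of formal Laurent series `k((t))`, with values in `k` (given by the coefficient at 0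
of a valuation-zero Laurent series). -/
noncomputable def tameSymbol {k : Type*} [Field k] (f g : LaurentSeries k) : k :=
  (((-1 : LaurentSeries k) ^ (f.order * g.order)) * f ^ (g.order) *
      g ^ (-(f.order))).coeff 0

namespace HahnSeries

noncomputable def leadingCoeffHom {Γ R : Type*} [AddCommMonoid Γ] [LinearOrder Γ]
    [IsOrderedCancelAddMonoid Γ] [Semiring R] [NoZeroDivisors R] : R⟦Γ⟧ →*₀ R where
  toFun := leadingCoeff
  map_zero' := leadingCoeff_zero
  map_one' := leadingCoeff_one
  map_mul' x y := leadingCoeff_mul x y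

section Field

variable {Γ K : Type*} [AddCommGroup Γ] [LinearOrder Γ] [IsOrderedAddMonoid Γ] [Field K]

theorem leadingCoeff_zpow (x : K⟦Γ⟧) (n : ℤ) : (x ^ n).leadingCoeff = x.leadingCoeff ^ n :=
  map_zpow₀ (leadingCoeffHom : K⟦Γ⟧ →*₀ K) x n

theorem order_inv {x : K⟦Γ⟧} (hx : x ≠ 0) : x⁻¹.order = -x.order := by
  rw [eq_neg_iff_add_eq_zero, add_comm, ← order_mul hx (inv_ne_zero hx), mul_inv_cancel₀ hx,
    order_one]

theorem order_zpow {x : K⟦Γ⟧} (hx : x ≠ 0) (n : ℤ) : (x ^ n).order = n • x.order := by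
  cases n with
  | ofNat m => simp
  | negSucc m => rw [zpow_negSucc, order_inv (pow_ne_zero _ hx), order_pow, negSucc_zsmul]

end Field

section OneSub

variable {Γ R : Type*} [Zero Γ] [LinearOrder Γ] [Ring R] {x : R⟦Γ⟧}

theorem orderTop_eq_order_of_order_ne_zero (hx : x.order ≠ 0) : x.orderTop = x.order := by
  rw [order_eq_orderTop_of_ne_zero]
  rintro rfl
  exact hx order_zero

theorem order_eq_of_orderTop_eq {g : Γ} (h : x.orderTop = g) : x.order = g := by
  have hx : x ≠ 0 := orderTop_ne_top.1 (h ▸ WithTop.coe_ne_top)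
  rw [← WithTop.coe_eq_coe, order_eq_orderTop_of_ne_zero hx, h]

theorem leadingCoeff_eq_one_of_order_eq_zero (hx : x.order = 0) (h : 0 < (1 - x).order) :
    x.leadingCoeff = 1 := by
  have hcoeff : (1 - x).coeff 0 = 0 := coeff_eq_zero_of_lt_order h
  rw [coeff_sub, coeff_one, if_pos rfl, sub_eq_zero] at hcoeff
  rw [leadingCoeff_eq, hx, hcoeff]

variable [Nontrivial R]

theorem orderTop_one_lt_of_order_pos (hx : 0 < x.order) :
    (1 : R⟦Γ⟧).orderTop < x.orderTop := by
  rw [orderTop_eq_order_of_order_ne_zero hx.ne', orderTop_one]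
  exact_mod_cast hx

theorem orderTop_lt_one_of_order_neg (hx : x.order < 0) :
    x.orderTop < (1 : R⟦Γ⟧).orderTop := by
  rw [orderTop_eq_order_of_order_ne_zero hx.ne, orderTop_one]
  exact_mod_cast hx

theorem order_one_sub_of_order_pos (hx : 0 < x.order) : (1 - x).order = 0 :=
  order_eq_of_orderTop_eq <| (orderTop_sub (orderTop_one_lt_of_order_pos hx)).trans orderTop_one

theorem leadingCoeff_one_sub_of_order_pos (hx : 0 < x.order) : (1 - x).leadingCoeff = 1 := by
  rw [leadingCoeff_sub (orderTop_one_lt_of_order_pos hx), leadingCoeff_one]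

theorem order_one_sub_of_order_neg (hx : x.order < 0) : (1 - x).order = x.order := by
  rw [← neg_sub, order_neg]
  exact order_eq_of_orderTop_eq <| (orderTop_sub (orderTop_lt_one_of_order_neg hx)).trans
    (orderTop_eq_order_of_order_ne_zero hx.ne)

theorem leadingCoeff_one_sub_of_order_neg (hx : x.order < 0) :
    (1 - x).leadingCoeff = -x.leadingCoeff := by
  rw [← neg_sub, leadingCoeff_neg, leadingCoeff_sub (orderTop_lt_one_of_order_neg hx)]

end OneSub

end HahnSeries

theorem neg_one_zpow_mul_self_mul_zpow_mul_neg_zpow_neg {K : Type*} [Field K] {u : K}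
    (hu : u ≠ 0) (n : ℤ) : (-1) ^ (n * n) * u ^ n * (-u) ^ (-n) = 1 := by
  have hsign : (-1 : K) ^ (n * n) * (-1) ^ (-n) = 1 := by
    rw [← zpow_add₀ (neg_ne_zero.2 one_ne_zero), ← sub_eq_add_neg, ← mul_sub_one]
    exact (Int.even_mul_pred_self n).neg_one_zpow
  have hunit : u ^ n * u ^ (-n) = 1 := by rw [← zpow_add₀ hu, add_neg_cancel, zpow_zero]
  rw [neg_eq_neg_one_mul u, mul_zpow]
  linear_combination u ^ n * u ^ (-n) * hsign + hunit

section TameSymbol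

variable {k : Type*} [Field k] {f g : LaurentSeries k}

theorem tameSymbol_eq (hf : f ≠ 0) (hg : g ≠ 0) :
    tameSymbol f g =
      (-1) ^ (f.order * g.order) * f.leadingCoeff ^ g.order * g.leadingCoeff ^ (-f.order) := by
  have hneg : (-1 : LaurentSeries k) ≠ 0 := neg_ne_zero.2 one_ne_zero
  have hord : ((-1 : LaurentSeries k) ^ (f.order * g.order) * f ^ g.order *
      g ^ (-f.order)).order = 0 := by
    rw [order_mul (mul_ne_zero (zpow_ne_zero _ hneg) (zpow_ne_zero _ hf)) (zpow_ne_zero _ hg),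
      order_mul (zpow_ne_zero _ hneg) (zpow_ne_zero _ hf), order_zpow hneg, order_zpow hf,
      order_zpow hg, order_neg, order_one]
    simp only [smul_eq_mul]
    ring
  rw [tameSymbol, ← hord, ← leadingCoeff_eq]
  simp only [leadingCoeff_mul, leadingCoeff_zpow, leadingCoeff_neg, leadingCoeff_one]

theorem tameSymbol_mul_left {f' : LaurentSeries k} (hf : f ≠ 0) (hf' : f' ≠ 0) (hg : g ≠ 0) :
    tameSymbol (f * f') g = tameSymbol f g * tameSymbol f' g := by
  have hg' : g.leadingCoeff ≠ 0 := leadingCoeff_ne_zero.2 hg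
  rw [tameSymbol_eq (mul_ne_zero hf hf') hg, tameSymbol_eq hf hg, tameSymbol_eq hf' hg,
    order_mul hf hf', leadingCoeff_mul, add_mul, zpow_add₀ (neg_ne_zero.2 one_ne_zero), mul_zpow,
    neg_add, zpow_add₀ hg']
  ring

theorem tameSymbol_mul_right {g' : LaurentSeries k} (hf : f ≠ 0) (hg : g ≠ 0) (hg' : g' ≠ 0) :
    tameSymbol f (g * g') = tameSymbol f g * tameSymbol f g' := by
  have hf' : f.leadingCoeff ≠ 0 := leadingCoeff_ne_zero.2 hf
  rw [tameSymbol_eq hf (mul_ne_zero hg hg'), tameSymbol_eq hf hg, tameSymbol_eq hf hg',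
    order_mul hg hg', leadingCoeff_mul, mul_add, zpow_add₀ (neg_ne_zero.2 one_ne_zero), mul_zpow,
    zpow_add₀ hf']
  ring

theorem tameSymbol_ne_zero (hf : f ≠ 0) (hg : g ≠ 0) : tameSymbol f g ≠ 0 := by
  rw [tameSymbol_eq hf hg]
  exact mul_ne_zero (mul_ne_zero (zpow_ne_zero _ (neg_ne_zero.2 one_ne_zero))
    (zpow_ne_zero _ (leadingCoeff_ne_zero.2 hf))) (zpow_ne_zero _ (leadingCoeff_ne_zero.2 hg))

theorem tameSymbol_one_sub_self (hf : f ≠ 0) (hf₁ : f ≠ 1) : tameSymbol f (1 - f) = 1 := by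
  rw [tameSymbol_eq hf (sub_ne_zero.2 hf₁.symm)]
  rcases lt_trichotomy f.order 0 with hneg | hzero | hpos
  · rw [order_one_sub_of_order_neg hneg, leadingCoeff_one_sub_of_order_neg hneg]
    exact neg_one_zpow_mul_self_mul_zpow_mul_neg_zpow_neg (leadingCoeff_ne_zero.2 hf) _
  · rw [hzero, zero_mul, neg_zero, zpow_zero, zpow_zero, one_mul, mul_one]
    rcases lt_trichotomy (1 - f).order 0 with h | h | h
    · -- impossible: `f = 1 - (1 - f)` would then have the negative order of `1 - f`
      have := order_one_sub_of_order_neg h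
      rw [sub_sub_cancel] at this
      omega
    · rw [h, zpow_zero]
    · rw [leadingCoeff_eq_one_of_order_eq_zero hzero h, one_zpow]
  · rw [order_one_sub_of_order_pos hpos, leadingCoeff_one_sub_of_order_pos hpos]
    simp

end TameSymbol

/-- The tame symbol on `k((t))` is bimultiplicative, takes values in `k^*`, and
satisfies the Steinberg relation `λ(f, 1-f) = 1`. -/
theorem tameSymbol_bimultiplicative_steinberg {k : Type*} [Field k] :
    (∀ f f' g : LaurentSeries k, f ≠ 0 → f' ≠ 0 → g ≠ 0 →
        tameSymbol (f * f') g = tameSymbol f g * tameSymbol f' g) ∧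
    (∀ f g g' : LaurentSeries k, f ≠ 0 → g ≠ 0 → g' ≠ 0 →
        tameSymbol f (g * g') = tameSymbol f g * tameSymbol f g') ∧
    (∀ f g : LaurentSeries k, f ≠ 0 → g ≠ 0 → tameSymbol f g ≠ 0) ∧
    (∀ f : LaurentSeries k, f ≠ 0 → f ≠ 1 → tameSymbol f (1 - f) = 1) :=
  ⟨fun _ _ _ => tameSymbol_mul_left, fun _ _ _ => tameSymbol_mul_right,
    fun _ _ => tameSymbol_ne_zero, fun _ => tameSymbol_one_sub_self⟩
end
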